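/- For every functor B : [ℓ] ⥤ Rep_K(Q) there exists a short exact sequence 0 → B_tor → B → M → 0 in the functor category such that B_tor(ℓ) = 0 (so B_tor is torsion) and M is filtered. Explicitly, one may take B_tor(ℓ) = 0, B_tor(ℓ−1) = ker(B(ℓ−1 ≤ ℓ)), and for 1 ≤ j < ℓ−1, B_tor(j) equal to the preimage of B_tor(ℓ−1) under the composite transition map B(j) → B(ℓ−1); this defines a subobject of B whose quotient is filtered. -/
import Mathlib


/-!
STATEMENT 6: For every `B : [ℓ] ⥤ Rep_K(Q)` there is a short exact sequence
`0 → B_tor → B → M → 0` in the functor category with `B_tor(ℓ) = 0` (so `B_tor`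
is torsion) and `M` filtered.
-/

open CategoryTheory CategoryTheory.Limits

theorem exists_torsion_filtered_sequence
    (K : Type) [Field K] (Q : Type) [Quiver.{1} Q]
    [Fintype Q] [∀ a b : Q, Fintype (a ⟶ b)]
    (hacyclic : ∀ (v : Q) (p : Quiver.Path v v), p = Quiver.Path.nil)
    (ℓ : ℕ) (hℓ : 1 ≤ ℓ)
    (B : Fin ℓ ⥤ (Paths Q ⥤ ModuleCat.{0} K)) :
    ∃ (Btor M : Fin ℓ ⥤ (Paths Q ⥤ ModuleCat.{0} K))
      (i : Btor ⟶ B) (p : B ⟶ M) (w : i ≫ p = 0),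
      IsZero (Btor.obj ⟨ℓ - 1, by omega⟩) ∧
      (∀ (j k : Fin ℓ) (h : j ≤ k), Mono (M.map (homOfLE h))) ∧
      (ShortComplex.mk i p w).ShortExact := by
  set last : Fin ℓ := ⟨ℓ - 1, by omega⟩ with hlast
  have hle : ∀ j : Fin ℓ, j ≤ last := fun j => by
    simp only [hlast, Fin.le_def]; omega
  let η : B ⟶ (Functor.const (Fin ℓ)).obj (B.obj last) :=
    { app := fun j => B.map (homOfLE (hle j))
      naturality := fun j k f => by
        dsimp
        rw [Category.comp_id, ← B.map_comp]
        congr 1 }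
  have hηlast : η.app last = 𝟙 _ := by
    show B.map (homOfLE (hle last)) = _
    have : homOfLE (hle last) = 𝟙 last := rfl
    rw [this, B.map_id]
  let M := image η
  let p : B ⟶ M := factorThruImage η
  -- p.app last is mono
  have hsplit : p.app last ≫ (image.ι η).app last = 𝟙 _ := by
    have h1 : (factorThruImage η ≫ image.ι η).app last = η.app last := by rw [image.fac]
    rw [NatTrans.comp_app] at h1
    rw [h1, hηlast]
  have hmono_plast : Mono (p.app last) := by
    have : Mono (p.app last ≫ (image.ι η).app last) := by
      rw [hsplit]; infer_instance
    exact mono_of_mono (p.app last) ((image.ι η).app last)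
  refine ⟨kernel p, M, kernel.ι p, p, kernel.condition p, ?_, ?_, ?_⟩
  · -- IsZero (kernel p).obj last
    have e1 : (kernel p).obj last ≅ kernel (p.app last) :=
      PreservesKernel.iso ((evaluation (Fin ℓ) (Paths Q ⥤ ModuleCat.{0} K)).obj last) p
    have : IsZero (kernel (p.app last)) := by
      have := hmono_plast
      exact (isZero_zero _).of_iso (kernel.ofMono (p.app last))
    exact this.of_iso e1
  · intro j k h
    have hι : ∀ x, Mono ((image.ι η).app x) := fun x => inferInstance
    have hnat := (image.ι η).naturality (homOfLE h)
    have : (image η).map (homOfLE h) ≫ (image.ι η).app k = (image.ι η).app j := by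
      simp only [Functor.const_obj_map, Category.comp_id] at hnat; exact hnat
    have : Mono ((image η).map (homOfLE h) ≫ (image.ι η).app k) := by
      rw [this]; exact hι j
    exact mono_of_mono _ ((image.ι η).app k)
  · have hexact : (ShortComplex.mk (kernel.ι p) p (kernel.condition p)).Exact :=
      ShortComplex.exact_of_f_is_kernel _ (kernelIsKernel p)
    exact { exact := hexact, mono_f := inferInstance, epi_g := inferInstance }
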